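/- arXiv:gr-qc/9610013 — 3 statements merged into one kernel-verified Lean document; each statement's English description precedes it below -/
import Mathlib

section
/- Let (Σ, g) be a 2-dimensional Riemannian manifold and K a transverse traceless symmetric 2-tensor. Then the rough Laplacian of K satisfies ∇^c ∇_c K_{ab} = R K_{ab}, where R is the scalar curvature. -/
open scoped BigOperators
noncomputable section

/-- A point in a local coordinate chart of the 2-manifold Σ. -/
abbrev Pt := Fin 2 → ℝ

/-- A metric (or symmetric 2-tensor field) in local coordinates. -/
abbrev Ten2 := Pt → Matrix (Fin 2) (Fin 2) ℝ

/-- Partial derivative ∂_i f. -/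
def pd (i : Fin 2) (f : Pt → ℝ) (x : Pt) : ℝ :=
  fderiv ℝ f x (Pi.single i 1)

/-- Christoffel symbols Γ^k_{ij} of the Levi-Civita connection of `g`. -/
def christoffel (g : Ten2) (k i j : Fin 2) (x : Pt) : ℝ :=
  (1 / 2) * ∑ l, (g x)⁻¹ k l *
    (pd i (fun y => g y l j) x + pd j (fun y => g y l i) x - pd l (fun y => g y i j) x)

/-- Riemann curvature tensor R^a_{bcd}. -/
def riemUp (g : Ten2) (a b c d : Fin 2) (x : Pt) : ℝ :=
  pd c (fun y => christoffel g a d b y) x - pd d (fun y => christoffel g a c b y) x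
    + ∑ e, christoffel g a c e x * christoffel g e d b x
    - ∑ e, christoffel g a d e x * christoffel g e c b x

/-- Riemann curvature tensor with all indices lowered, R_{abcd}. -/
def riem (g : Ten2) (a b c d : Fin 2) (x : Pt) : ℝ :=
  ∑ e, g x a e * riemUp g e b c d x

/-- Ricci curvature Ric_{bd}. -/
def ric (g : Ten2) (b d : Fin 2) (x : Pt) : ℝ := ∑ a, riemUp g a b a d x

/-- Scalar curvature R. -/
def scal (g : Ten2) (x : Pt) : ℝ := ∑ b, ∑ d, (g x)⁻¹ b d * ric g b d x

/-- Covariant derivative ∇_c K_{ab} of a covariant 2-tensor `K` w.r.t. `g`. -/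
def covDeriv2 (g : Ten2) (K : Ten2) (c a b : Fin 2) (x : Pt) : ℝ :=
  pd c (fun y => K y a b) x - ∑ d, christoffel g d c a x * K x d b
    - ∑ d, christoffel g d c b x * K x a d

/-- Covariant derivative ∇_d T_{cab} of a covariant 3-tensor `T` w.r.t. `g`. -/
def covDeriv3 (g : Ten2) (T : Fin 2 → Fin 2 → Fin 2 → Pt → ℝ) (d c a b : Fin 2) (x : Pt) : ℝ :=
  pd d (T c a b) x - ∑ e, christoffel g e d c x * T e a b x
    - ∑ e, christoffel g e d a x * T c e b x
    - ∑ e, christoffel g e d b x * T c a e x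

/-- Laplace–Beltrami operator on scalar functions, Δ_g f = g^{ij}(∂_i∂_j f - Γ^k_{ij}∂_k f). -/
def lapScalar (g : Ten2) (f : Pt → ℝ) (x : Pt) : ℝ :=
  ∑ i, ∑ j, (g x)⁻¹ i j * (pd i (pd j f) x - ∑ k, christoffel g k i j x * pd k f x)

/-- Squared norm |K|_g² = K_{ab}K^{ab}. -/
def normSq2 (g : Ten2) (K : Ten2) (x : Pt) : ℝ :=
  ∑ a, ∑ b, ∑ c, ∑ d, (g x)⁻¹ a c * (g x)⁻¹ b d * K x a b * K x c d

/-- Squared norm |∇K|_g² = ∇_c K_{ab} ∇^c K^{ab}. -/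
def normSqCov (g : Ten2) (K : Ten2) (x : Pt) : ℝ :=
  ∑ e, ∑ f, ∑ a, ∑ b, ∑ c, ∑ d, (g x)⁻¹ e f * (g x)⁻¹ a c * (g x)⁻¹ b d *
    covDeriv2 g K e a b x * covDeriv2 g K f c d x

/-- Smoothness of a 2-tensor field in local coordinates. -/
def SmoothTen2 (g : Ten2) : Prop := ∀ i j, ContDiff ℝ (⊤ : ℕ∞) fun x => g x i j

section AuxCalc
variable {x : Pt}

lemma pd_congr {f h : Pt → ℝ} (hfh : ∀ y, f y = h y) (i : Fin 2) (x : Pt) :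
    pd i f x = pd i h x := by
  have : f = h := funext hfh
  rw [this]

lemma pd_const (c : ℝ) (i : Fin 2) (x : Pt) : pd i (fun _ => c) x = 0 := by
  simp [pd, fderiv_const]

lemma pd_add {f h : Pt → ℝ} (hf : DifferentiableAt ℝ f x) (hh : DifferentiableAt ℝ h x)
    (i : Fin 2) : pd i (fun y => f y + h y) x = pd i f x + pd i h x := by
  simp [pd, fderiv_fun_add hf hh]

lemma pd_sub {f h : Pt → ℝ} (hf : DifferentiableAt ℝ f x) (hh : DifferentiableAt ℝ h x)
    (i : Fin 2) : pd i (fun y => f y - h y) x = pd i f x - pd i h x := by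
  simp [pd, fderiv_fun_sub hf hh]

lemma pd_mul {f h : Pt → ℝ} (hf : DifferentiableAt ℝ f x) (hh : DifferentiableAt ℝ h x)
    (i : Fin 2) : pd i (fun y => f y * h y) x = pd i f x * h x + f x * pd i h x := by
  simp [pd, fderiv_fun_mul hf hh]; ring

lemma pd_sum {F : Fin 2 → Pt → ℝ} (h : ∀ j, DifferentiableAt ℝ (F j) x)
    (i : Fin 2) : pd i (fun y => ∑ j, F j y) x = ∑ j, pd i (F j) x := by
  simp only [Fin.sum_univ_two]
  exact pd_add (h 0) (h 1) i

lemma Sm.pd {f : Pt → ℝ} (hf : ContDiff ℝ (⊤ : ℕ∞) f) (i : Fin 2) :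
    ContDiff ℝ (⊤ : ℕ∞) (fun x => pd i f x) :=
  (hf.fderiv_right (by simp)).clm_apply contDiff_const

lemma ContDiff.diffAt {f : Pt → ℝ} (hf : ContDiff ℝ (⊤ : ℕ∞) f) (x : Pt) : DifferentiableAt ℝ f x :=
  (hf.differentiable (by simp)).differentiableAt

lemma pd_comm {f : Pt → ℝ} (hf : ContDiff ℝ (⊤ : ℕ∞) f) (i j : Fin 2) (x : Pt) :
    pd i (fun y => pd j f y) x = pd j (fun y => pd i f y) x := by
  have hsym : IsSymmSndFDerivAt ℝ f x := hf.contDiffAt.isSymmSndFDerivAt (by simp only [minSmoothness_of_isRCLikeNormedField]; change ((2 : ℕ∞) : WithTop ℕ∞) ≤ _; exact WithTop.coe_le_coe.mpr le_top)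
  have hd : DifferentiableAt ℝ (fderiv ℝ f) x :=
    ((hf.fderiv_right (m := 1) (WithTop.coe_le_coe.mpr le_top)).differentiable one_ne_zero).differentiableAt
  have key : ∀ a b : Fin 2, pd a (fun y => pd b f y) x
      = fderiv ℝ (fderiv ℝ f) x (Pi.single a 1) (Pi.single b 1) := by
    intro a b
    rw [show pd a (fun y => pd b f y) x
        = fderiv ℝ (fun y => (fderiv ℝ f y) (Pi.single b 1)) x (Pi.single a 1) from rfl]
    rw [fderiv_clm_apply hd (differentiableAt_const _)]
    simp
  rw [key, key, hsym]

end AuxCalc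

section AuxMetric
variable {g : Ten2}

lemma gdet_ne (hgpos : ∀ x, (g x).PosDef) (x : Pt) : (g x).det ≠ 0 :=
  (hgpos x).det_pos.ne'

lemma gsymm (hgpos : ∀ x, (g x).PosDef) (y : Pt) (a b : Fin 2) : g y a b = g y b a := by
  have h := (hgpos y).1
  have := congrFun (congrFun h.eq b) a
  simpa [Matrix.conjTranspose_apply] using this

lemma mul_inv_entry (hgpos : ∀ x, (g x).PosDef) (x : Pt) (a b : Fin 2) :
    ∑ e, g x a e * (g x)⁻¹ e b = if a = b then 1 else 0 := by
  have h := Matrix.mul_nonsing_inv (g x) (isUnit_iff_ne_zero.mpr (gdet_ne hgpos x))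
  have h2 := congrFun (congrFun h a) b
  simpa [Matrix.mul_apply, Matrix.one_apply] using h2

lemma inv_mul_entry (hgpos : ∀ x, (g x).PosDef) (x : Pt) (a b : Fin 2) :
    ∑ e, (g x)⁻¹ a e * g x e b = if a = b then 1 else 0 := by
  have h := Matrix.nonsing_inv_mul (g x) (isUnit_iff_ne_zero.mpr (gdet_ne hgpos x))
  have h2 := congrFun (congrFun h a) b
  simpa [Matrix.mul_apply, Matrix.one_apply] using h2

open Matrix in
lemma ginv_symm (hgpos : ∀ x, (g x).PosDef) (y : Pt) (a b : Fin 2) :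
    (g y)⁻¹ a b = (g y)⁻¹ b a := by
  have ht : (g y).transpose = g y := by
    ext i j; exact gsymm hgpos y j i
  have h := Matrix.transpose_nonsing_inv (g y)
  rw [show (g y)ᵀ = g y from ht] at h
  have := congrFun (congrFun h b) a
  simpa [Matrix.transpose_apply] using this

lemma Sm_det (hg : SmoothTen2 g) : ContDiff ℝ (⊤ : ℕ∞) (fun x => (g x).det) := by
  simp only [Matrix.det_fin_two]
  exact ((hg 0 0).mul (hg 1 1)).sub ((hg 0 1).mul (hg 1 0))

lemma ginv_apply (x : Pt) (a b : Fin 2) :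
    (g x)⁻¹ a b = ((g x).det)⁻¹ * (g x).adjugate a b := by
  rw [Matrix.inv_def]
  simp [Ring.inverse_eq_inv']

lemma Sm_ginv (hg : SmoothTen2 g) (hgpos : ∀ x, (g x).PosDef) (a b : Fin 2) :
    ContDiff ℝ (⊤ : ℕ∞) (fun x => (g x)⁻¹ a b) := by
  have h : (fun x => (g x)⁻¹ a b) = fun x => ((g x).det)⁻¹ * (g x).adjugate a b :=
    funext fun x => ginv_apply x a b
  rw [h]
  refine ((Sm_det hg).inv (fun x => gdet_ne hgpos x)).mul ?_
  have hadj : ∀ x : Pt, (g x).adjugate = !![g x 1 1, -(g x 0 1); -(g x 1 0), g x 0 0] :=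
    fun x => Matrix.adjugate_fin_two _
  simp only [hadj]
  fin_cases a <;> fin_cases b <;> simp [Matrix.cons_val_zero, Matrix.cons_val_one]
  · exact hg 1 1
  · exact (hg 0 1).neg
  · exact (hg 1 0).neg
  · exact hg 0 0

lemma Sm_chris (hg : SmoothTen2 g) (hgpos : ∀ x, (g x).PosDef) (k i j : Fin 2) :
    ContDiff ℝ (⊤ : ℕ∞) (fun x => christoffel g k i j x) := by
  unfold christoffel
  exact contDiff_const.mul (ContDiff.sum fun l _ => (Sm_ginv hg hgpos k l).mul
    (((Sm.pd (hg l j) i).add (Sm.pd (hg l i) j)).sub (Sm.pd (hg i j) l)))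

lemma Sm_covD2 (hg : SmoothTen2 g) (hgpos : ∀ x, (g x).PosDef) {A : Ten2}
    (hA : SmoothTen2 A) (c a b : Fin 2) :
    ContDiff ℝ (⊤ : ℕ∞) (fun x => covDeriv2 g A c a b x) := by
  unfold covDeriv2
  exact ((Sm.pd (hA a b) c).sub
      (ContDiff.sum fun d _ => (Sm_chris hg hgpos d c a).mul (hA d b))).sub
    (ContDiff.sum fun d _ => (Sm_chris hg hgpos d c b).mul (hA a d))

end AuxMetric
section AuxChris
variable {g : Ten2}

lemma fin2 (c : Fin 2) : c = 0 ∨ c = 1 := by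
  match c with
  | 0 => exact Or.inl rfl
  | 1 => exact Or.inr rfl

lemma gchris (hgpos : ∀ x, (g x).PosDef) (x : Pt) (c a b : Fin 2) :
    ∑ d, christoffel g d c a x * g x d b
      = (1/2) * (pd c (fun y => g y a b) x + pd a (fun y => g y c b) x
          - pd b (fun y => g y c a) x) := by
  have hgs : ∀ y : Pt, g y 1 0 = g y 0 1 := fun y => gsymm hgpos y 1 0
  have hgis : (g x)⁻¹ 1 0 = (g x)⁻¹ 0 1 := ginv_symm hgpos x 1 0
  have e00 : g x 0 0 * (g x)⁻¹ 0 0 + g x 0 1 * (g x)⁻¹ 0 1 = 1 := by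
    simpa [Fin.sum_univ_two, hgs, hgis] using mul_inv_entry hgpos x 0 0
  have e01 : g x 0 0 * (g x)⁻¹ 0 1 + g x 0 1 * (g x)⁻¹ 1 1 = 0 := by
    simpa [Fin.sum_univ_two, hgs, hgis] using mul_inv_entry hgpos x 0 1
  have e10 : g x 0 1 * (g x)⁻¹ 0 0 + g x 1 1 * (g x)⁻¹ 0 1 = 0 := by
    simpa [Fin.sum_univ_two, hgs, hgis] using mul_inv_entry hgpos x 1 0
  have e11 : g x 0 1 * (g x)⁻¹ 0 1 + g x 1 1 * (g x)⁻¹ 1 1 = 1 := by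
    simpa [Fin.sum_univ_two, hgs, hgis] using mul_inv_entry hgpos x 1 1
  rcases fin2 c with rfl | rfl <;> rcases fin2 a with rfl | rfl <;> rcases fin2 b with rfl | rfl <;>
      simp only [christoffel, Fin.sum_univ_two, hgs, hgis, Fin.isValue]
  · linear_combination (1/2 : ℝ) * pd 0 (fun y => g y 0 0) x * e00 + (1 : ℝ) * pd 0 (fun y => g y 0 1) x * e01 + (-1/2 : ℝ) * pd 1 (fun y => g y 0 0) x * e01
  · linear_combination (1/2 : ℝ) * pd 0 (fun y => g y 0 0) x * e10 + (1 : ℝ) * pd 0 (fun y => g y 0 1) x * e11 + (-1/2 : ℝ) * pd 1 (fun y => g y 0 0) x * e11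
  · linear_combination (1/2 : ℝ) * pd 1 (fun y => g y 0 0) x * e00 + (1/2 : ℝ) * pd 0 (fun y => g y 1 1) x * e01
  · linear_combination (1/2 : ℝ) * pd 1 (fun y => g y 0 0) x * e10 + (1/2 : ℝ) * pd 0 (fun y => g y 1 1) x * e11
  · linear_combination (1/2 : ℝ) * pd 1 (fun y => g y 0 0) x * e00 + (1/2 : ℝ) * pd 0 (fun y => g y 1 1) x * e01
  · linear_combination (1/2 : ℝ) * pd 1 (fun y => g y 0 0) x * e10 + (1/2 : ℝ) * pd 0 (fun y => g y 1 1) x * e11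
  · linear_combination (-1/2 : ℝ) * pd 0 (fun y => g y 1 1) x * e00 + (1 : ℝ) * pd 1 (fun y => g y 0 1) x * e00 + (1/2 : ℝ) * pd 1 (fun y => g y 1 1) x * e01
  · linear_combination (-1/2 : ℝ) * pd 0 (fun y => g y 1 1) x * e10 + (1 : ℝ) * pd 1 (fun y => g y 0 1) x * e10 + (1/2 : ℝ) * pd 1 (fun y => g y 1 1) x * e11

end AuxChris
section AuxDGinv
variable {g : Ten2}

lemma dginv (hg : SmoothTen2 g) (hgpos : ∀ x, (g x).PosDef) (x : Pt) (c a b : Fin 2) :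
    pd c (fun y => (g y)⁻¹ a b) x
      = -(∑ e, christoffel g a c e x * (g x)⁻¹ e b)
        - ∑ e, christoffel g b c e x * (g x)⁻¹ a e := by
  have hgs : ∀ y : Pt, g y 1 0 = g y 0 1 := fun y => gsymm hgpos y 1 0
  have hgis : ∀ y : Pt, (g y)⁻¹ 1 0 = (g y)⁻¹ 0 1 := fun y => ginv_symm hgpos y 1 0
  have e00 : g x 0 0 * (g x)⁻¹ 0 0 + g x 0 1 * (g x)⁻¹ 0 1 = 1 := by
    simpa [Fin.sum_univ_two, hgs, hgis] using mul_inv_entry hgpos x 0 0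
  have e01 : g x 0 0 * (g x)⁻¹ 0 1 + g x 0 1 * (g x)⁻¹ 1 1 = 0 := by
    simpa [Fin.sum_univ_two, hgs, hgis] using mul_inv_entry hgpos x 0 1
  have e10 : g x 0 1 * (g x)⁻¹ 0 0 + g x 1 1 * (g x)⁻¹ 0 1 = 0 := by
    simpa [Fin.sum_univ_two, hgs, hgis] using mul_inv_entry hgpos x 1 0
  have e11 : g x 0 1 * (g x)⁻¹ 0 1 + g x 1 1 * (g x)⁻¹ 1 1 = 1 := by
    simpa [Fin.sum_univ_two, hgs, hgis] using mul_inv_entry hgpos x 1 1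
  have hE : ∀ p q : Fin 2,
      (pd c (fun y => g y p 0) x * (g x)⁻¹ 0 q + g x p 0 * pd c (fun y => (g y)⁻¹ 0 q) x)
        + (pd c (fun y => g y p 1) x * (g x)⁻¹ 1 q
            + g x p 1 * pd c (fun y => (g y)⁻¹ 1 q) x) = 0 := by
    intro p q
    have hconst : (fun y => ∑ e, g y p e * (g y)⁻¹ e q) = fun _ => if p = q then (1:ℝ) else 0 :=
      funext fun y => mul_inv_entry hgpos y p q
    have h0 : pd c (fun y => ∑ e, g y p e * (g y)⁻¹ e q) x = 0 := by
      rw [hconst]; exact pd_const _ c x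
    rw [pd_sum (fun e => ((hg p e).diffAt x).fun_mul ((Sm_ginv hg hgpos e q).diffAt x)) c,
      Fin.sum_univ_two,
      pd_mul ((hg p 0).diffAt x) ((Sm_ginv hg hgpos 0 q).diffAt x),
      pd_mul ((hg p 1).diffAt x) ((Sm_ginv hg hgpos 1 q).diffAt x)] at h0
    exact h0
  have hE00 := hE 0 0
  have hE01 := hE 0 1
  have hE10 := hE 1 0
  have hE11 := hE 1 1
  simp only [hgs, hgis] at hE00 hE01 hE10 hE11
  rcases fin2 c with rfl | rfl <;> rcases fin2 a with rfl | rfl <;> rcases fin2 b with rfl | rfl <;>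
      simp only [christoffel, Fin.sum_univ_two, hgs, hgis, Fin.isValue]
  · linear_combination (norm := ring1) (1 : ℝ) * (g x)⁻¹ 0 0 * hE00 + (1 : ℝ) * (g x)⁻¹ 0 1 * hE10 + (-1 : ℝ) * pd 0 (fun y => (g y)⁻¹ 0 0) x * e00 + (-1 : ℝ) * pd 0 (fun y => (g y)⁻¹ 0 1) x * e10
  · linear_combination (norm := ring1) (1 : ℝ) * (g x)⁻¹ 0 0 * hE01 + (1 : ℝ) * (g x)⁻¹ 0 1 * hE11 + (-1 : ℝ) * pd 0 (fun y => (g y)⁻¹ 0 1) x * e00 + (-1 : ℝ) * pd 0 (fun y => (g y)⁻¹ 1 1) x * e10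
  · linear_combination (norm := ring1) (1 : ℝ) * (g x)⁻¹ 0 0 * hE01 + (1 : ℝ) * (g x)⁻¹ 0 1 * hE11 + (-1 : ℝ) * pd 0 (fun y => (g y)⁻¹ 0 1) x * e00 + (-1 : ℝ) * pd 0 (fun y => (g y)⁻¹ 1 1) x * e10
  · linear_combination (norm := ring1) (1 : ℝ) * (g x)⁻¹ 0 1 * hE01 + (1 : ℝ) * (g x)⁻¹ 1 1 * hE11 + (-1 : ℝ) * pd 0 (fun y => (g y)⁻¹ 0 1) x * e01 + (-1 : ℝ) * pd 0 (fun y => (g y)⁻¹ 1 1) x * e11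
  · linear_combination (norm := ring1) (1 : ℝ) * (g x)⁻¹ 0 0 * hE00 + (1 : ℝ) * (g x)⁻¹ 0 1 * hE10 + (-1 : ℝ) * pd 1 (fun y => (g y)⁻¹ 0 0) x * e00 + (-1 : ℝ) * pd 1 (fun y => (g y)⁻¹ 0 1) x * e10
  · linear_combination (norm := ring1) (1 : ℝ) * (g x)⁻¹ 0 0 * hE01 + (1 : ℝ) * (g x)⁻¹ 0 1 * hE11 + (-1 : ℝ) * pd 1 (fun y => (g y)⁻¹ 0 1) x * e00 + (-1 : ℝ) * pd 1 (fun y => (g y)⁻¹ 1 1) x * e10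
  · linear_combination (norm := ring1) (1 : ℝ) * (g x)⁻¹ 0 0 * hE01 + (1 : ℝ) * (g x)⁻¹ 0 1 * hE11 + (-1 : ℝ) * pd 1 (fun y => (g y)⁻¹ 0 1) x * e00 + (-1 : ℝ) * pd 1 (fun y => (g y)⁻¹ 1 1) x * e10
  · linear_combination (norm := ring1) (1 : ℝ) * (g x)⁻¹ 0 1 * hE01 + (1 : ℝ) * (g x)⁻¹ 1 1 * hE11 + (-1 : ℝ) * pd 1 (fun y => (g y)⁻¹ 0 1) x * e01 + (-1 : ℝ) * pd 1 (fun y => (g y)⁻¹ 1 1) x * e11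

end AuxDGinv
section AuxRicci
variable {g : Ten2}

lemma chris_symm (hgpos : ∀ x, (g x).PosDef) (k i j : Fin 2) (x : Pt) :
    christoffel g k i j x = christoffel g k j i x := by
  unfold christoffel
  congr 1
  refine Finset.sum_congr rfl fun l _ => ?_
  rw [pd_congr (fun y => gsymm hgpos y i j) l x]
  ring

lemma covD2_g_zero (hgpos : ∀ x, (g x).PosDef) (c a b : Fin 2) (y : Pt) :
    covDeriv2 g g c a b y = 0 := by
  unfold covDeriv2
  rw [gchris hgpos y c a b]
  have h2 : ∑ d, christoffel g d c b y * g y a d = ∑ d, christoffel g d c b y * g y d a :=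
    Finset.sum_congr rfl fun d _ => by rw [gsymm hgpos y a d]
  rw [h2, gchris hgpos y c b a]
  linear_combination (-1/2 : ℝ) * pd_congr (fun z => gsymm hgpos z b a) c y

lemma pd_covD2 (hg : SmoothTen2 g) (hgpos : ∀ x, (g x).PosDef) {A : Ten2}
    (hA : SmoothTen2 A) (x : Pt) (d c a b : Fin 2) :
    pd d (covDeriv2 g A c a b) x
      = pd d (fun y => pd c (fun z => A z a b) y) x
        - ∑ e, (pd d (fun y => christoffel g e c a y) x * A x e b
            + christoffel g e c a x * pd d (fun y => A y e b) x)
        - ∑ e, (pd d (fun y => christoffel g e c b y) x * A x a e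
            + christoffel g e c b x * pd d (fun y => A y a e) x) := by
  have hmul : ∀ p q r s t : Fin 2, pd d (fun y => christoffel g p q r y * A y s t) x
      = pd d (fun y => christoffel g p q r y) x * A x s t
        + christoffel g p q r x * pd d (fun y => A y s t) x :=
    fun p q r s t => pd_mul ((Sm_chris hg hgpos p q r).diffAt x) ((hA s t).diffAt x) d
  have h1 : covDeriv2 g A c a b = fun y =>
      (pd c (fun z => A z a b) y - ∑ e, christoffel g e c a y * A y e b)
        - ∑ e, christoffel g e c b y * A y a e := rfl
  rw [h1]
  rw [pd_sub (DifferentiableAt.fun_sub ((Sm.pd (hA a b) c).diffAt x)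
        (DifferentiableAt.fun_sum fun e _ =>
          ((Sm_chris hg hgpos e c a).diffAt x).fun_mul ((hA e b).diffAt x)))
      (DifferentiableAt.fun_sum fun e _ =>
        ((Sm_chris hg hgpos e c b).diffAt x).fun_mul ((hA a e).diffAt x)) d]
  rw [pd_sub ((Sm.pd (hA a b) c).diffAt x)
      (DifferentiableAt.fun_sum fun e _ =>
        ((Sm_chris hg hgpos e c a).diffAt x).fun_mul ((hA e b).diffAt x)) d]
  rw [pd_sum (fun e => ((Sm_chris hg hgpos e c a).diffAt x).fun_mul ((hA e b).diffAt x)) d]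
  rw [pd_sum (fun e => ((Sm_chris hg hgpos e c b).diffAt x).fun_mul ((hA a e).diffAt x)) d]
  simp only [hmul]

end AuxRicci
section AuxRicci2
variable {g : Ten2}

lemma ricci_id (hg : SmoothTen2 g) (hgpos : ∀ x, (g x).PosDef) {A : Ten2}
    (hA : SmoothTen2 A) (x : Pt) (c d a b : Fin 2) :
    covDeriv3 g (covDeriv2 g A) c d a b x - covDeriv3 g (covDeriv2 g A) d c a b x
      = -(∑ e, riemUp g e a c d x * A x e b) - ∑ e, riemUp g e b c d x * A x a e := by
  have hcs : ∀ (k : Fin 2) (y : Pt), christoffel g k 1 0 y = christoffel g k 0 1 y :=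
    fun k y => chris_symm hgpos k 1 0 y
  unfold covDeriv3
  rw [pd_covD2 hg hgpos hA x c d a b, pd_covD2 hg hgpos hA x d c a b]
  unfold covDeriv2 riemUp
  rcases fin2 c with rfl | rfl <;> rcases fin2 d with rfl | rfl <;>
      simp only [Fin.sum_univ_two, hcs]
  · ring
  · rw [pd_comm (hA a b) 1 0 x]; ring
  · rw [pd_comm (hA a b) 0 1 x]; ring
  · ring

end AuxRicci2
section AuxCurv
variable {g K : Ten2}

lemma covD3_g_zero (hg : SmoothTen2 g) (hgpos : ∀ x, (g x).PosDef) (c d a b : Fin 2) (x : Pt) :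
    covDeriv3 g (covDeriv2 g g) c d a b x = 0 := by
  unfold covDeriv3
  rw [pd_congr (h := fun _ => (0:ℝ)) (fun y => covD2_g_zero hgpos d a b y) c x, pd_const]
  simp [covD2_g_zero hgpos]

lemma riem_pair_antisymm (hg : SmoothTen2 g) (hgpos : ∀ x, (g x).PosDef) (x : Pt)
    (a b c d : Fin 2) : riem g a b c d x + riem g b a c d x = 0 := by
  have h := ricci_id hg hgpos (A := g) hg x c d a b
  rw [covD3_g_zero hg hgpos c d a b x, covD3_g_zero hg hgpos d c a b x] at h
  have hs : ∀ p q, g x p q = g x q p := fun p q => gsymm hgpos x p q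
  unfold riem
  simp only [Fin.sum_univ_two] at h ⊢
  linear_combination h + riemUp g 0 a c d x * hs b 0 + riemUp g 1 a c d x * hs b 1

lemma riemUp_last_zero (e q r : Fin 2) (x : Pt) : riemUp g e q r r x = 0 := by
  unfold riemUp; ring

lemma riem_lastswap (p q r s : Fin 2) (x : Pt) : riem g p q r s x = - riem g p q s r x := by
  unfold riem riemUp
  simp only [Fin.sum_univ_two]
  ring

lemma raise (hgpos : ∀ x, (g x).PosDef) (x : Pt) (e b c d : Fin 2) :
    riemUp g e b c d x = ∑ f, (g x)⁻¹ e f * riem g f b c d x := by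
  unfold riem
  simp only [Fin.sum_univ_two]
  rcases fin2 e with rfl | rfl
  · have i00 : (g x)⁻¹ 0 0 * g x 0 0 + (g x)⁻¹ 0 1 * g x 1 0 = 1 := by
      simpa [Fin.sum_univ_two] using inv_mul_entry hgpos x 0 0
    have i01 : (g x)⁻¹ 0 0 * g x 0 1 + (g x)⁻¹ 0 1 * g x 1 1 = 0 := by
      simpa [Fin.sum_univ_two] using inv_mul_entry hgpos x 0 1
    linear_combination (-riemUp g 0 b c d x) * i00 + (-riemUp g 1 b c d x) * i01
  · have i10 : (g x)⁻¹ 1 0 * g x 0 0 + (g x)⁻¹ 1 1 * g x 1 0 = 0 := by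
      simpa [Fin.sum_univ_two] using inv_mul_entry hgpos x 1 0
    have i11 : (g x)⁻¹ 1 0 * g x 0 1 + (g x)⁻¹ 1 1 * g x 1 1 = 1 := by
      simpa [Fin.sum_univ_two] using inv_mul_entry hgpos x 1 1
    linear_combination (-riemUp g 0 b c d x) * i10 + (-riemUp g 1 b c d x) * i11

end AuxCurv

section AuxSymT
variable {g K : Ten2}

lemma trace_covD2 (hg : SmoothTen2 g) (hgpos : ∀ x, (g x).PosDef) (hK : SmoothTen2 K)
    (htrace : ∀ x, ∑ a, ∑ b, (g x)⁻¹ a b * K x a b = 0) (x : Pt) (c : Fin 2) :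
    ∑ a, ∑ b, (g x)⁻¹ a b * covDeriv2 g K c a b x = 0 := by
  have hpd : pd c (fun y => ∑ a, ∑ b, (g y)⁻¹ a b * K y a b) x = 0 := by
    rw [show (fun y => ∑ a, ∑ b, (g y)⁻¹ a b * K y a b) = fun _ => (0:ℝ) from funext htrace]
    exact pd_const 0 c x
  rw [pd_sum (fun a => DifferentiableAt.fun_sum fun b _ =>
      ((Sm_ginv hg hgpos a b).diffAt x).fun_mul ((hK a b).diffAt x)) c] at hpd
  rw [Fin.sum_univ_two,
    pd_sum (fun b => ((Sm_ginv hg hgpos 0 b).diffAt x).fun_mul ((hK 0 b).diffAt x)) c,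
    pd_sum (fun b => ((Sm_ginv hg hgpos 1 b).diffAt x).fun_mul ((hK 1 b).diffAt x)) c,
    Fin.sum_univ_two, Fin.sum_univ_two] at hpd
  have hm : ∀ p q : Fin 2, pd c (fun y => (g y)⁻¹ p q * K y p q) x
      = pd c (fun y => (g y)⁻¹ p q) x * K x p q + (g x)⁻¹ p q * pd c (fun y => K y p q) x :=
    fun p q => pd_mul ((Sm_ginv hg hgpos p q).diffAt x) ((hK p q).diffAt x) c
  simp only [hm, dginv hg hgpos] at hpd
  unfold covDeriv2
  simp only [Fin.sum_univ_two] at hpd ⊢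
  linear_combination hpd

lemma covD2_symm (hgpos : ∀ x, (g x).PosDef) (hKsymm : ∀ x a b, K x a b = K x b a)
    (x : Pt) (c a b : Fin 2) : covDeriv2 g K c a b x = covDeriv2 g K c b a x := by
  have hK10 : ∀ y : Pt, K y 1 0 = K y 0 1 := fun y => hKsymm y 1 0
  unfold covDeriv2
  rw [pd_congr (fun y => hKsymm y a b) c x]
  rcases fin2 a with rfl | rfl <;> rcases fin2 b with rfl | rfl <;>
    simp only [Fin.sum_univ_two, hK10] <;> ring

lemma covD2_symm12 (hg : SmoothTen2 g) (hgpos : ∀ x, (g x).PosDef) (hK : SmoothTen2 K)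
    (hKsymm : ∀ x a b, K x a b = K x b a)
    (htrace : ∀ x, ∑ a, ∑ b, (g x)⁻¹ a b * K x a b = 0)
    (hdiv : ∀ x b, ∑ c, ∑ a, (g x)⁻¹ c a * covDeriv2 g K c a b x = 0)
    (x : Pt) (c a b : Fin 2) : covDeriv2 g K c a b x = covDeriv2 g K a c b x := by
  have key : ∀ b' : Fin 2, covDeriv2 g K 1 0 b' x = covDeriv2 g K 0 1 b' x := by
    have hgs : ∀ y : Pt, g y 1 0 = g y 0 1 := fun y => gsymm hgpos y 1 0
    have hgis : ∀ y : Pt, (g y)⁻¹ 1 0 = (g y)⁻¹ 0 1 := fun y => ginv_symm hgpos y 1 0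
    have e00 : g x 0 0 * (g x)⁻¹ 0 0 + g x 0 1 * (g x)⁻¹ 0 1 = 1 := by
      simpa [Fin.sum_univ_two, hgs, hgis] using mul_inv_entry hgpos x 0 0
    have e01 : g x 0 0 * (g x)⁻¹ 0 1 + g x 0 1 * (g x)⁻¹ 1 1 = 0 := by
      simpa [Fin.sum_univ_two, hgs, hgis] using mul_inv_entry hgpos x 0 1
    have e10 : g x 0 1 * (g x)⁻¹ 0 0 + g x 1 1 * (g x)⁻¹ 0 1 = 0 := by
      simpa [Fin.sum_univ_two, hgs, hgis] using mul_inv_entry hgpos x 1 0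
    have e11 : g x 0 1 * (g x)⁻¹ 0 1 + g x 1 1 * (g x)⁻¹ 1 1 = 1 := by
      simpa [Fin.sum_univ_two, hgs, hgis] using mul_inv_entry hgpos x 1 1
    have hTs : ∀ (c' : Fin 2) (y : Pt), covDeriv2 g K c' 1 0 y = covDeriv2 g K c' 0 1 y :=
      fun c' y => covD2_symm hgpos hKsymm y c' 1 0
    have hd0 := hdiv x 0
    have hd1 := hdiv x 1
    have he0 := trace_covD2 hg hgpos hK htrace x 0
    have he1 := trace_covD2 hg hgpos hK htrace x 1
    simp only [Fin.sum_univ_two, hgis, hTs] at hd0 hd1 he0 he1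
    intro b'
    rcases fin2 b' with rfl | rfl
    · rw [hTs 0 x]
      linear_combination (1 : ℝ) * g x 0 1 * hd0 + (-1 : ℝ) * g x 0 0 * hd1 + (-1 : ℝ) * g x 0 1 * he0 + (1 : ℝ) * g x 0 0 * he1 + (1 : ℝ) * covDeriv2 g K 0 0 1 x * e00 + (-1 : ℝ) * covDeriv2 g K 1 0 0 x * e00 + (1 : ℝ) * covDeriv2 g K 0 1 1 x * e01 + (-1 : ℝ) * covDeriv2 g K 1 0 1 x * e01
    · linear_combination (1 : ℝ) * g x 1 1 * hd0 + (-1 : ℝ) * g x 0 1 * hd1 + (-1 : ℝ) * g x 1 1 * he0 + (1 : ℝ) * g x 0 1 * he1 + (1 : ℝ) * covDeriv2 g K 0 0 1 x * e10 + (-1 : ℝ) * covDeriv2 g K 1 0 0 x * e10 + (1 : ℝ) * covDeriv2 g K 0 1 1 x * e11 + (-1 : ℝ) * covDeriv2 g K 1 0 1 x * e11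
  rcases fin2 c with rfl | rfl <;> rcases fin2 a with rfl | rfl
  · rfl
  · exact (key b).symm
  · exact key b
  · rfl

end AuxSymT
section AuxFinal
variable {g K : Ten2}

lemma covD3_swap (hg : SmoothTen2 g) (hgpos : ∀ x, (g x).PosDef) (hK : SmoothTen2 K)
    (hKsymm : ∀ x a b, K x a b = K x b a)
    (htrace : ∀ x, ∑ a, ∑ b, (g x)⁻¹ a b * K x a b = 0)
    (hdiv : ∀ x b, ∑ c, ∑ a, (g x)⁻¹ c a * covDeriv2 g K c a b x = 0)
    (x : Pt) (c d a b : Fin 2) :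
    covDeriv3 g (covDeriv2 g K) c d a b x = covDeriv3 g (covDeriv2 g K) c a d b x := by
  have hS : ∀ (y : Pt) (p q r : Fin 2), covDeriv2 g K p q r y = covDeriv2 g K q p r y :=
    fun y p q r => covD2_symm12 hg hgpos hK hKsymm htrace hdiv y p q r
  have hS10 : ∀ (r : Fin 2) (y : Pt), covDeriv2 g K 1 0 r y = covDeriv2 g K 0 1 r y :=
    fun r y => hS y 1 0 r
  unfold covDeriv3
  rw [pd_congr (fun y => hS y d a b) c x]
  rcases fin2 d with rfl | rfl <;> rcases fin2 a with rfl | rfl <;>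
    simp only [Fin.sum_univ_two, hS10] <;> ring

lemma stepC (hg : SmoothTen2 g) (hgpos : ∀ x, (g x).PosDef) (hK : SmoothTen2 K)
    (hdiv : ∀ x b, ∑ c, ∑ a, (g x)⁻¹ c a * covDeriv2 g K c a b x = 0)
    (x : Pt) (a b : Fin 2) :
    ∑ c, ∑ d, (g x)⁻¹ c d * covDeriv3 g (covDeriv2 g K) a c d b x = 0 := by
  have hpd : pd a (fun y => ∑ c, ∑ d, (g y)⁻¹ c d * covDeriv2 g K c d b y) x = 0 := by
    rw [show (fun y => ∑ c, ∑ d, (g y)⁻¹ c d * covDeriv2 g K c d b y) = fun _ => (0:ℝ) from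
      funext fun y => hdiv y b]
    exact pd_const 0 a x
  rw [pd_sum (fun c => DifferentiableAt.fun_sum fun d _ =>
      ((Sm_ginv hg hgpos c d).diffAt x).fun_mul ((Sm_covD2 hg hgpos hK c d b).diffAt x)) a] at hpd
  rw [Fin.sum_univ_two,
    pd_sum (fun d => ((Sm_ginv hg hgpos 0 d).diffAt x).fun_mul ((Sm_covD2 hg hgpos hK 0 d b).diffAt x)) a,
    pd_sum (fun d => ((Sm_ginv hg hgpos 1 d).diffAt x).fun_mul ((Sm_covD2 hg hgpos hK 1 d b).diffAt x)) a,
    Fin.sum_univ_two, Fin.sum_univ_two] at hpd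
  have hm : ∀ p q : Fin 2, pd a (fun y => (g y)⁻¹ p q * covDeriv2 g K p q b y) x
      = pd a (fun y => (g y)⁻¹ p q) x * covDeriv2 g K p q b x
        + (g x)⁻¹ p q * pd a (covDeriv2 g K p q b) x :=
    fun p q => pd_mul ((Sm_ginv hg hgpos p q).diffAt x)
      ((Sm_covD2 hg hgpos hK p q b).diffAt x) a
  simp only [hm, dginv hg hgpos] at hpd
  have hd0 := hdiv x 0
  have hd1 := hdiv x 1
  unfold covDeriv3
  simp only [Fin.sum_univ_two] at hd0 hd1 hpd ⊢
  linear_combination hpd - christoffel g 0 a b x * hd0 - christoffel g 1 a b x * hd1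

lemma stepD (hg : SmoothTen2 g) (hgpos : ∀ x, (g x).PosDef)
    (hKsymm : ∀ x a b, K x a b = K x b a)
    (htrace : ∀ x, ∑ a, ∑ b, (g x)⁻¹ a b * K x a b = 0)
    (x : Pt) (a b : Fin 2) :
    ∑ c, ∑ d, (g x)⁻¹ c d * (-(∑ e, riemUp g e d c a x * K x e b)
        - ∑ e, riemUp g e b c a x * K x d e)
      = scal g x * K x a b := by
  have hgis : ∀ y : Pt, (g y)⁻¹ 1 0 = (g y)⁻¹ 0 1 := fun y => ginv_symm hgpos y 1 0
  have hK10 : ∀ y : Pt, K y 1 0 = K y 0 1 := fun y => hKsymm y 1 0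
  have rcc : ∀ p q r : Fin 2, riem g p q r r x = 0 := by
    intro p q r
    unfold riem
    simp [riemUp_last_zero]
  have r00 : ∀ r s : Fin 2, riem g 0 0 r s x = 0 := by
    intro r s
    have := riem_pair_antisymm hg hgpos x 0 0 r s
    linarith
  have r11 : ∀ r s : Fin 2, riem g 1 1 r s x = 0 := by
    intro r s
    have := riem_pair_antisymm hg hgpos x 1 1 r s
    linarith
  have r10 : ∀ r s : Fin 2, riem g 1 0 r s x = -riem g 0 1 r s x := by
    intro r s
    have := riem_pair_antisymm hg hgpos x 0 1 r s
    linarith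
  have rswap : ∀ p q : Fin 2, riem g p q 1 0 x = -riem g p q 0 1 x :=
    fun p q => riem_lastswap p q 1 0 x
  have ht := htrace x
  simp only [Fin.sum_univ_two, hgis, hK10] at ht
  unfold scal ric
  simp only [raise hgpos x]
  rcases fin2 a with rfl | rfl <;> rcases fin2 b with rfl | rfl <;>
    simp only [Fin.sum_univ_two, r00, r11, r10, rswap, rcc, hgis, hK10]
  · linear_combination (-((g x)⁻¹ 1 1 * riem g 0 1 0 1 x)) * ht
  · linear_combination ((g x)⁻¹ 0 1 * riem g 0 1 0 1 x) * ht
  · linear_combination ((g x)⁻¹ 0 1 * riem g 0 1 0 1 x) * ht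
  · linear_combination (-((g x)⁻¹ 0 0 * riem g 0 1 0 1 x)) * ht

end AuxFinal
/-- for a transverse traceless symmetric 2-tensor `K` on a 2-dimensional
Riemannian manifold, the rough Laplacian satisfies ∇^c∇_c K_{ab} = R K_{ab}. -/
theorem rough_laplacian_of_TT (g K : Ten2)
    (hg : SmoothTen2 g) (hK : SmoothTen2 K)
    (hgpos : ∀ x, (g x).PosDef)
    (hKsymm : ∀ x a b, K x a b = K x b a)
    (htrace : ∀ x, ∑ a, ∑ b, (g x)⁻¹ a b * K x a b = 0)
    (hdiv : ∀ x b, ∑ c, ∑ a, (g x)⁻¹ c a * covDeriv2 g K c a b x = 0) :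
    ∀ x a b,
      (∑ c, ∑ d, (g x)⁻¹ c d * covDeriv3 g (covDeriv2 g K) c d a b x)
        = scal g x * K x a b := by
  intro x a b
  have h1 : ∀ c d : Fin 2, covDeriv3 g (covDeriv2 g K) c d a b x
      = covDeriv3 g (covDeriv2 g K) c a d b x :=
    fun c d => covD3_swap hg hgpos hK hKsymm htrace hdiv x c d a b
  have h2 : ∀ c d : Fin 2, covDeriv3 g (covDeriv2 g K) c a d b x
      - covDeriv3 g (covDeriv2 g K) a c d b x
      = -(∑ e, riemUp g e d c a x * K x e b) - ∑ e, riemUp g e b c a x * K x d e :=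
    fun c d => ricci_id hg hgpos hK x c a d b
  have hC := stepC hg hgpos hK hdiv x a b
  have hD := stepD hg hgpos hKsymm htrace x a b
  simp only [Fin.sum_univ_two] at h2 hC hD ⊢
  linear_combination (g x)⁻¹ 0 0 * h1 0 0 + (g x)⁻¹ 0 1 * h1 0 1
    + (g x)⁻¹ 1 0 * h1 1 0 + (g x)⁻¹ 1 1 * h1 1 1
    + (g x)⁻¹ 0 0 * h2 0 0 + (g x)⁻¹ 0 1 * h2 0 1
    + (g x)⁻¹ 1 0 * h2 1 0 + (g x)⁻¹ 1 1 * h2 1 1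
    + hC + hD
end
end

section
/- Let S₀ be a self-adjoint endomorphism of a 2-dimensional inner product space with tr S₀ = −τ₀ (suitably oriented), tr-free part bounded so that S₀ ≤ ((−τ₀ + √(τ₀² − 2Λ))/2) I < 0 where τ₀ > √(2Λ), Λ ≥ 0. Then for all s > 0, the endomorphism F(s) = cosh(√(Λ/2) s) I − √(2/Λ) sinh(√(Λ/2) s) S₀ (for Λ > 0), respectively F(s) = I − s S₀ (for Λ = 0), is invertible. -/
open Matrix
noncomputable section

lemma aux_unit (S₀ : Matrix (Fin 2) (Fin 2) ℝ) (μ a b : ℝ) (hμ : μ < 0)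
    (ha : 0 < a) (hb : 0 < b)
    (hbound : ∀ v : Fin 2 → ℝ, S₀.mulVec v ⬝ᵥ v ≤ μ * (v ⬝ᵥ v)) :
    IsUnit (a • (1 : Matrix (Fin 2) (Fin 2) ℝ) - b • S₀) := by
  rw [Matrix.isUnit_iff_isUnit_det, isUnit_iff_ne_zero]
  intro hdet
  obtain ⟨v, hv0, hv⟩ := (Matrix.exists_mulVec_eq_zero_iff).2 hdet
  have hvv : 0 < v ⬝ᵥ v := by
    have hnn : 0 ≤ v ⬝ᵥ v := Finset.sum_nonneg fun i _ => mul_self_nonneg (v i)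
    rcases lt_or_eq_of_le hnn with h | h
    · exact h
    · exact absurd ((dotProduct_self_eq_zero).1 h.symm) hv0
  have hdot : ((a • (1 : Matrix (Fin 2) (Fin 2) ℝ) - b • S₀).mulVec v) ⬝ᵥ v = 0 := by
    rw [hv]; simp
  rw [Matrix.sub_mulVec, Matrix.smul_mulVec, Matrix.smul_mulVec,
    Matrix.one_mulVec, sub_dotProduct, smul_dotProduct,
    smul_dotProduct] at hdot
  have h1 : b * (S₀.mulVec v ⬝ᵥ v) ≤ b * (μ * (v ⬝ᵥ v)) :=
    mul_le_mul_of_nonneg_left (hbound v) hb.le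
  have h2 : 0 < a * (v ⬝ᵥ v) - b * (μ * (v ⬝ᵥ v)) := by
    have : b * (μ * (v ⬝ᵥ v)) < 0 := by
      apply mul_neg_of_pos_of_neg hb
      exact mul_neg_of_neg_of_pos hμ hvv
    nlinarith [mul_pos ha hvv]
  simp only [smul_eq_mul] at hdot
  linarith

/-- let S₀ be a self-adjoint endomorphism of a 2-dimensional inner product
space with tr S₀ = −τ₀ and S₀ ≤ ((−τ₀ + √(τ₀² − 2Λ))/2)·I < 0, where τ₀ > √(2Λ), Λ ≥ 0.
Then for all s > 0 the Jacobi solution F(s) = cosh(√(Λ/2)s)·I − √(2/Λ)sinh(√(Λ/2)s)·S₀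
(for Λ > 0), resp. F(s) = I − s·S₀ (for Λ = 0), is invertible. -/
theorem jacobi_solution_invertible (Λ τ₀ : ℝ) (S₀ : Matrix (Fin 2) (Fin 2) ℝ)
    (hΛ : 0 ≤ Λ) (hτ₀ : Real.sqrt (2 * Λ) < τ₀)
    (hsym : S₀.IsSymm) (htr : S₀.trace = -τ₀)
    (hbound : ∀ v : Fin 2 → ℝ,
      S₀.mulVec v ⬝ᵥ v ≤ ((-τ₀ + Real.sqrt (τ₀ ^ 2 - 2 * Λ)) / 2) * (v ⬝ᵥ v))
    (hneg : (-τ₀ + Real.sqrt (τ₀ ^ 2 - 2 * Λ)) / 2 < 0) :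
    (Λ = 0 → ∀ s : ℝ, 0 < s → IsUnit (1 - s • S₀)) ∧
    (0 < Λ → ∀ s : ℝ, 0 < s → IsUnit
      (Real.cosh (Real.sqrt (Λ / 2) * s) • (1 : Matrix (Fin 2) (Fin 2) ℝ)
        - (Real.sqrt (2 / Λ) * Real.sinh (Real.sqrt (Λ / 2) * s)) • S₀)) := by
  constructor
  · intro _ s hs
    have := aux_unit S₀ _ 1 s hneg one_pos hs hbound
    simpa using this
  · intro hΛpos s hs
    apply aux_unit S₀ _ _ _ hneg _ _ hbound
    · exact Real.cosh_pos _
    · apply mul_pos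
      · exact Real.sqrt_pos.2 (by positivity)
      · exact Real.sinh_pos_iff.2 (mul_pos (Real.sqrt_pos.2 (by positivity)) hs)
end
end

section
/- Let Σ be compact, h a Riemannian metric on Σ, λ a smooth function, g = e^{2λ} h, and p_TT, π_TT symmetric contravariant 2-tensors related by π_TT^{ab} = e^{−4λ} p_TT^{ab}. If p_TT is transverse traceless with respect to h, then π_TT is transverse traceless with respect to g, and |π_TT|_g² = e^{−4λ} |p_TT|_h². -/
open scoped BigOperators
noncomputable section

/-- Divergence ∇_a P^{ab} of a contravariant symmetric 2-tensor `P` w.r.t. `g`. -/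
def divUp (g : Ten2) (P : Ten2) (b : Fin 2) (x : Pt) : ℝ :=
  ∑ a, (pd a (fun y => P y a b) x
    + ∑ c, christoffel g a a c x * P x c b
    + ∑ c, christoffel g b a c x * P x a c)

/-- Squared norm |P|_g² = g_{ac} g_{bd} P^{ab} P^{cd} of a contravariant 2-tensor. -/
def normSqUp (g : Ten2) (P : Ten2) (x : Pt) : ℝ :=
  ∑ a, ∑ b, ∑ c, ∑ d, g x a c * g x b d * P x a b * P x c d


/-- Auxiliary: inverse of a scalar multiple of an invertible 2x2 matrix. -/
lemma inv_smul_mat (k : ℝ) (hk : k ≠ 0) (A : Matrix (Fin 2) (Fin 2) ℝ) (hA : IsUnit A.det) :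
    (k • A)⁻¹ = k⁻¹ • A⁻¹ := by
  apply Matrix.inv_eq_left_inv
  rw [Matrix.smul_mul, Matrix.mul_smul, smul_smul, inv_mul_cancel₀ hk,
    Matrix.nonsing_inv_mul A hA, one_smul]

/-- Auxiliary: product rule for `pd` applied to `exp (c * lam) * f`. -/
lemma pd_exp_mul (c : ℝ) (lam f : Pt → ℝ) (x : Pt) (hlx : DifferentiableAt ℝ lam x)
    (hf : DifferentiableAt ℝ f x) (i : Fin 2) :
    pd i (fun y => Real.exp (c * lam y) * f y) x
      = Real.exp (c * lam x) * (c * pd i lam x * f x + pd i f x) := by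
  have h1 : HasFDerivAt lam (fderiv ℝ lam x) x := hlx.hasFDerivAt
  have h3 := ((h1.const_mul c).exp).mul hf.hasFDerivAt
  rw [pd, show (fun y => Real.exp (c * lam y) * f y) = (fun x => Real.exp (c * lam x)) * f from rfl,
    h3.fderiv]
  simp [pd]; ring

/-- Auxiliary: conformal transformation of the Christoffel symbols. -/
lemma christoffel_conf (h : Ten2) (lam : Pt → ℝ)
    (hh : SmoothTen2 h) (hhpos : ∀ x, (h x).PosDef) (hlam : ContDiff ℝ (⊤ : ℕ∞) lam)
    (k i j : Fin 2) (x : Pt) :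
    christoffel (fun y => Real.exp (2 * lam y) • h y) k i j x
      = christoffel h k i j x
        + ((if k = j then 1 else 0) * pd i lam x + (if k = i then 1 else 0) * pd j lam x
          - h x i j * ∑ l, (h x)⁻¹ k l * pd l lam x) := by
  have hu : IsUnit (h x).det := isUnit_iff_ne_zero.mpr (hhpos x).det_pos.ne'
  have hE : Real.exp (2 * lam x) ≠ 0 := Real.exp_ne_zero _
  have hpd : ∀ (a b : Fin 2) (m : Fin 2),
      pd m (fun y => Real.exp (2 * lam y) * h y a b) x
        = Real.exp (2 * lam x) * (2 * pd m lam x * h x a b + pd m (fun y => h y a b) x) := by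
    intro a b m
    rw [pd_exp_mul 2 lam _ x (hlam.differentiable (by simp) x)
      ((hh a b).differentiable (by simp) x)]
  have e1 : ∑ l, (h x)⁻¹ k l * h x l j = if k = j then 1 else 0 := by
    rw [← Matrix.mul_apply, Matrix.nonsing_inv_mul _ hu, Matrix.one_apply]
  have e2 : ∑ l, (h x)⁻¹ k l * h x l i = if k = i then 1 else 0 := by
    rw [← Matrix.mul_apply, Matrix.nonsing_inv_mul _ hu, Matrix.one_apply]
  have key : ∀ Hkl a1 a2 a3 : ℝ, (Real.exp (2 * lam x))⁻¹ * Hkl * (Real.exp (2 * lam x) * a1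
      + Real.exp (2 * lam x) * a2 - Real.exp (2 * lam x) * a3) = Hkl * (a1 + a2 - a3) := by
    intros; field_simp
  unfold christoffel
  rw [inv_smul_mat _ hE _ hu]
  simp only [Matrix.smul_apply, smul_eq_mul]
  simp only [hpd, key]
  rw [← e1, ← e2]
  simp only [Fin.sum_univ_two]
  ring

/-- Auxiliary: `h_{ac} h^{al} ∂_l λ = ∂_c λ` for a symmetric invertible `h`. -/
lemma sum_hinv_lam (h : Ten2) (lam : Pt → ℝ) (hhpos : ∀ x, (h x).PosDef) (x : Pt) (c : Fin 2) :
    h x 0 c * ((h x)⁻¹ 0 0 * pd 0 lam x + (h x)⁻¹ 0 1 * pd 1 lam x)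
      + h x 1 c * ((h x)⁻¹ 1 0 * pd 0 lam x + (h x)⁻¹ 1 1 * pd 1 lam x)
      = pd c lam x := by
  have hu : IsUnit (h x).det := isUnit_iff_ne_zero.mpr (hhpos x).det_pos.ne'
  have hm := Matrix.mul_nonsing_inv (h x) hu
  have em : ∀ c' l : Fin 2, h x c' 0 * (h x)⁻¹ 0 l + h x c' 1 * (h x)⁻¹ 1 l
      = if c' = l then 1 else 0 := by
    intro c' l
    have := congrFun (congrFun hm c') l
    rwa [Matrix.mul_apply, Fin.sum_univ_two, Matrix.one_apply] at this
  have hsym : ∀ i j, h x i j = h x j i := by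
    intro i j
    conv_lhs => rw [← (hhpos x).isHermitian.eq]
    simp [Matrix.conjTranspose_apply]
  have e0 := em 0 0; have e1 := em 0 1; have e2 := em 1 0; have e3 := em 1 1
  simp only [Fin.reduceEq, reduceIte] at e0 e1 e2 e3
  fin_cases c <;> simp only [Fin.zero_eta, Fin.mk_one, Fin.isValue]
  · linear_combination (pd 0 lam x) * e0 + (pd 1 lam x) * e1
      + (pd 0 lam x * (h x)⁻¹ 1 0 + pd 1 lam x * (h x)⁻¹ 1 1) * (hsym 1 0)
  · linear_combination (pd 0 lam x) * e2 + (pd 1 lam x) * e3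
      + (pd 0 lam x * (h x)⁻¹ 0 0 + pd 1 lam x * (h x)⁻¹ 0 1) * (hsym 0 1)

/-- Auxiliary: conformal transformation of the divergence of a traceless symmetric tensor. -/
lemma div_conf (h : Ten2) (lam : Pt → ℝ) (p : Ten2)
    (hh : SmoothTen2 h) (hhpos : ∀ x, (h x).PosDef)
    (hlam : ContDiff ℝ (⊤ : ℕ∞) lam) (hp : SmoothTen2 p)
    (hpsymm : ∀ x a b, p x a b = p x b a)
    (htrace : ∀ x, ∑ a, ∑ b, h x a b * p x a b = 0)
    (x : Pt) (b : Fin 2) :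
    divUp (fun y => Real.exp (2 * lam y) • h y)
        (fun y => Real.exp (-(4 * lam y)) • p y) b x
      = Real.exp (-(4 * lam x)) * divUp h p b x := by
  have hpd : ∀ a b' : Fin 2, pd a (fun y => Real.exp (-(4 * lam y)) * p y a b') x
      = Real.exp (-(4 * lam x))
        * ((-4) * pd a lam x * p x a b' + pd a (fun y => p y a b') x) := by
    intro a b'
    have hfun : (fun y => Real.exp (-(4 * lam y)) * p y a b')
        = fun y => Real.exp ((-4) * lam y) * p y a b' := by
      funext y; norm_num
    rw [hfun, pd_exp_mul (-4) lam _ x (hlam.differentiable (by simp) x)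
      ((hp a b').differentiable (by simp) x)]
    norm_num
  have t := htrace x
  have s := hpsymm x 1 0
  have S0 := sum_hinv_lam h lam hhpos x 0
  have S1 := sum_hinv_lam h lam hhpos x 1
  simp only [Fin.sum_univ_two] at t
  unfold divUp
  simp only [Matrix.smul_apply, smul_eq_mul]
  simp only [hpd, christoffel_conf h lam hh hhpos hlam]
  fin_cases b <;>
    simp only [Fin.zero_eta, Fin.mk_one, Fin.isValue, Fin.sum_univ_two, Fin.reduceEq,
      reduceIte, if_true]
  · linear_combination Real.exp (-(4 * lam x)) * (-(p x 0 0)) * S0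
      + Real.exp (-(4 * lam x)) * (-(p x 1 0)) * S1
      + Real.exp (-(4 * lam x))
          * (-((h x)⁻¹ 0 0 * pd 0 lam x + (h x)⁻¹ 0 1 * pd 1 lam x)) * t
      + Real.exp (-(4 * lam x)) * (-(pd 1 lam x)) * s
  · linear_combination Real.exp (-(4 * lam x)) * (-(p x 0 1)) * S0
      + Real.exp (-(4 * lam x)) * (-(p x 1 1)) * S1
      + Real.exp (-(4 * lam x))
          * (-((h x)⁻¹ 1 0 * pd 0 lam x + (h x)⁻¹ 1 1 * pd 1 lam x)) * t
      + Real.exp (-(4 * lam x)) * (pd 0 lam x) * s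

/-- if `p_TT` is transverse traceless w.r.t. `h`, then on a 2-manifold
π_TT^{ab} = e^{−4λ} p_TT^{ab} is transverse traceless w.r.t. g = e^{2λ}h, and
|π_TT|_g² = e^{−4λ}|p_TT|_h². -/
theorem conformal_invariance_TT (h : Ten2) (lam : Pt → ℝ) (p : Ten2)
    (hh : SmoothTen2 h) (hhpos : ∀ x, (h x).PosDef)
    (hlam : ContDiff ℝ (⊤ : ℕ∞) lam) (hp : SmoothTen2 p)
    (hpsymm : ∀ x a b, p x a b = p x b a)
    (htrace : ∀ x, ∑ a, ∑ b, h x a b * p x a b = 0)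
    (hdiv : ∀ x b, divUp h p b x = 0) :
    (∀ x, ∑ a, ∑ b, (Real.exp (2 * lam x) • h x) a b
        * (Real.exp (-(4 * lam x)) • p x) a b = 0) ∧
    (∀ x b, divUp (fun y => Real.exp (2 * lam y) • h y)
        (fun y => Real.exp (-(4 * lam y)) • p y) b x = 0) ∧
    (∀ x, normSqUp (fun y => Real.exp (2 * lam y) • h y)
        (fun y => Real.exp (-(4 * lam y)) • p y) x
      = Real.exp (-(4 * lam x)) * normSqUp h p x) := by
  refine ⟨?_, ?_, ?_⟩
  · intro x
    have t := htrace x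
    simp only [Fin.sum_univ_two] at t ⊢
    simp only [Matrix.smul_apply, smul_eq_mul]
    linear_combination Real.exp (2 * lam x) * Real.exp (-(4 * lam x)) * t
  · intro x b
    rw [div_conf h lam p hh hhpos hlam hp hpsymm htrace x b, hdiv x b, mul_zero]
  · intro x
    have h1 : Real.exp (2 * lam x) * Real.exp (2 * lam x) * Real.exp (-(4 * lam x)) = 1 := by
      rw [← Real.exp_add, ← Real.exp_add,
        show 2 * lam x + 2 * lam x + -(4 * lam x) = 0 by ring, Real.exp_zero]
    have key : ∀ X Y Z W : ℝ,
        Real.exp (2 * lam x) * X * (Real.exp (2 * lam x) * Y) * (Real.exp (-(4 * lam x)) * Z)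
          * (Real.exp (-(4 * lam x)) * W)
          = Real.exp (-(4 * lam x)) * (X * Y * Z * W) := by
      intro X Y Z W
      linear_combination (X * Y * Z * W * Real.exp (-(4 * lam x))) * h1
    unfold normSqUp
    simp only [Matrix.smul_apply, smul_eq_mul, key, Fin.sum_univ_two]
    ring
end
end
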